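/- arXiv:2603.07013 — 2 statements merged into one kernel-verified Lean document; each statement's English description precedes it below -/
import Mathlib

section
/- Let δ ∈ (0,1), λ > 0, and let Ω ⊂ ℝ^N be a bounded measurable set. Define f_δ(u) = λ g_δ(u)² (1 + ∫_Ω g_δ(u(x)) dx)⁻² for u ∈ L²(Ω), where g_δ(u) = min(1/(1-u), 1/δ) pointwise extended appropriately (g_δ(u)=1/(1-u) for u ≤ 1-δ, g_δ(u)=1/δ otherwise). Then for all u₁, u₂ ∈ L²(Ω), ‖f_δ(u₁) - f_δ(u₂)‖_{L²(Ω)} ≤ (2λδ⁻³ + 2λδ⁻⁴|Ω|) ‖u₁ - u₂‖_{L²(Ω)}. -/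
/-!
`g_δ = 1 / max (1 - u) δ` is nonnegative, bounded by `δ⁻¹` and `δ⁻²`-Lipschitz. With
`P_i = 1 + ∫ g_δ(u_i) ≥ 1`, splitting
`f(u₁) - f(u₂) = λ (g(u₁)² - g(u₂)²) / P₁² + λ g(u₂)² (1 / P₁² - 1 / P₂²)`
gives the pointwise bound `|f(u₁) - f(u₂)| ≤ 2λδ⁻³ |u₁ - u₂| + 2λδ⁻⁴ ‖u₁ - u₂‖_{L¹}`.
Minkowski's inequality in `L²` and Cauchy–Schwarz `‖v‖_{L¹} ≤ |Ω|^{1/2} ‖v‖_{L²}` finish.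
-/

open Real MeasureTheory

noncomputable def truncInv (δ u : ℝ) : ℝ := (max (1 - u) δ)⁻¹

lemma truncInv_eq_ite (δ u : ℝ) :
    truncInv δ u = if u ≤ 1 - δ then 1 / (1 - u) else 1 / δ := by
  rw [truncInv, one_div, one_div]
  split_ifs with h
  · rw [max_eq_left (by linarith)]
  · rw [max_eq_right (by linarith)]

lemma truncInv_nonneg {δ : ℝ} (hδ : 0 ≤ δ) (u : ℝ) : 0 ≤ truncInv δ u :=
  inv_nonneg.2 (hδ.trans (le_max_right _ _))

lemma truncInv_le {δ : ℝ} (hδ : 0 < δ) (u : ℝ) : truncInv δ u ≤ δ⁻¹ :=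
  inv_anti₀ hδ (le_max_right _ _)

lemma measurable_truncInv (δ : ℝ) : Measurable (truncInv δ) := by
  unfold truncInv
  fun_prop

lemma abs_truncInv_sub_le {δ : ℝ} (hδ : 0 < δ) (a b : ℝ) :
    |truncInv δ a - truncInv δ b| ≤ δ⁻¹ ^ 2 * |a - b| := by
  have ha : 0 < max (1 - a) δ := hδ.trans_le (le_max_right _ _)
  have hb : 0 < max (1 - b) δ := hδ.trans_le (le_max_right _ _)
  have hmax : |max (1 - a) δ - max (1 - b) δ| ≤ |a - b| :=
    (abs_max_sub_max_le_abs _ _ δ).trans_eq (by rw [sub_sub_sub_cancel_left, abs_sub_comm])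
  rw [truncInv, truncInv, inv_sub_inv' ha.ne' hb.ne', abs_mul, abs_mul, abs_inv, abs_inv,
    abs_of_pos ha, abs_of_pos hb, abs_sub_comm]
  calc (max (1 - a) δ)⁻¹ * |max (1 - a) δ - max (1 - b) δ| * (max (1 - b) δ)⁻¹
      ≤ δ⁻¹ * |a - b| * δ⁻¹ := by gcongr <;> exact le_max_right _ _
    _ = δ⁻¹ ^ 2 * |a - b| := by ring

lemma abs_inv_sq_sub_inv_sq_le {P Q : ℝ} (hP : 1 ≤ P) (hQ : 1 ≤ Q) :
    |(P ^ 2)⁻¹ - (Q ^ 2)⁻¹| ≤ 2 * |P - Q| := by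
  have hP0 : 0 < P := one_pos.trans_le hP
  have hQ0 : 0 < Q := one_pos.trans_le hQ
  rw [inv_sub_inv' (by positivity) (by positivity), abs_mul, abs_mul,
    abs_of_pos (by positivity : 0 < (P ^ 2)⁻¹), abs_of_pos (by positivity : 0 < (Q ^ 2)⁻¹),
    show Q ^ 2 - P ^ 2 = (Q + P) * (Q - P) by ring, abs_mul, abs_of_pos (by positivity : 0 < Q + P),
    abs_sub_comm Q P]
  have hbound : (P ^ 2)⁻¹ * (Q + P) * (Q ^ 2)⁻¹ ≤ 2 := by
    rw [show (P ^ 2)⁻¹ * (Q + P) * (Q ^ 2)⁻¹ = (Q + P) / (P ^ 2 * Q ^ 2) by field_simp,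
      div_le_iff₀ (by positivity)]
    nlinarith [mul_le_mul hP hQ zero_le_one hP0.le]
  calc (P ^ 2)⁻¹ * ((Q + P) * |P - Q|) * (Q ^ 2)⁻¹
      = (P ^ 2)⁻¹ * (Q + P) * (Q ^ 2)⁻¹ * |P - Q| := by ring
    _ ≤ 2 * |P - Q| := by gcongr

lemma abs_sq_mul_inv_sq_sub_le {a b P Q M : ℝ} (ha : 0 ≤ a) (haM : a ≤ M) (hb : 0 ≤ b)
    (hbM : b ≤ M) (hP : 1 ≤ P) (hQ : 1 ≤ Q) :
    |a ^ 2 * (P ^ 2)⁻¹ - b ^ 2 * (Q ^ 2)⁻¹| ≤ 2 * M * |a - b| + 2 * M ^ 2 * |P - Q| := by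
  have hsq : |a ^ 2 - b ^ 2| ≤ 2 * M * |a - b| := by
    rw [sq_sub_sq, abs_mul, abs_of_nonneg (add_nonneg ha hb)]
    gcongr
    linarith
  have hPinv : (P ^ 2)⁻¹ ≤ 1 := inv_le_one_of_one_le₀ (one_le_pow₀ hP)
  calc |a ^ 2 * (P ^ 2)⁻¹ - b ^ 2 * (Q ^ 2)⁻¹|
      = |(a ^ 2 - b ^ 2) * (P ^ 2)⁻¹ + b ^ 2 * ((P ^ 2)⁻¹ - (Q ^ 2)⁻¹)| := by ring_nf
    _ ≤ |a ^ 2 - b ^ 2| * (P ^ 2)⁻¹ + b ^ 2 * |(P ^ 2)⁻¹ - (Q ^ 2)⁻¹| := by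
      refine (abs_add_le _ _).trans_eq ?_
      rw [abs_mul, abs_mul, abs_of_nonneg (by positivity : 0 ≤ (P ^ 2)⁻¹), abs_sq]
    _ ≤ 2 * M * |a - b| * 1 + M ^ 2 * (2 * |P - Q|) := by
      gcongr ?_ * ?_ + ?_ * ?_
      · have hM : 0 ≤ M := ha.trans haM
        positivity
      · exact pow_le_pow_left₀ hb hbM 2
      · exact abs_inv_sq_sub_inv_sq_le hP hQ
    _ = 2 * M * |a - b| + 2 * M ^ 2 * |P - Q| := by ring

section Integral

variable {α : Type*} [MeasurableSpace α] {μ : Measure α}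

lemma abs_integral_comp_sub_integral_comp_le {G : ℝ → ℝ} {K : ℝ}
    (hG : ∀ a b, |G a - G b| ≤ K * |a - b|) {u₁ u₂ : α → ℝ}
    (h₁ : Integrable (fun x ↦ G (u₁ x)) μ) (h₂ : Integrable (fun x ↦ G (u₂ x)) μ)
    (hu : Integrable (fun x ↦ u₁ x - u₂ x) μ) :
    |∫ x, G (u₁ x) ∂μ - ∫ x, G (u₂ x) ∂μ| ≤ K * ∫ x, |u₁ x - u₂ x| ∂μ := by
  rw [← integral_sub h₁ h₂, ← integral_const_mul]
  exact (abs_integral_le_integral_abs).trans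
    (integral_mono_of_nonneg (.of_forall fun _ ↦ abs_nonneg _) (hu.abs.const_mul K)
      (.of_forall fun x ↦ hG _ _))

lemma integral_abs_le_sqrt_measure_mul_sqrt_integral_sq [IsFiniteMeasure μ] {d : α → ℝ}
    (hd : MemLp d 2 μ) :
    ∫ x, |d x| ∂μ ≤ √(μ.real Set.univ) * √(∫ x, d x ^ 2 ∂μ) := by
  have h2 : ENNReal.ofReal 2 = 2 := ENNReal.ofReal_ofNat 2
  have := integral_mul_le_Lp_mul_Lq_of_nonneg Real.HolderConjugate.two_two
    (.of_forall fun x ↦ abs_nonneg (d x)) (.of_forall fun _ ↦ zero_le_one)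
    (h2 ▸ hd.abs) (h2 ▸ memLp_const 1)
  simp only [one_pow, mul_one, integral_const, smul_eq_mul, Real.rpow_two, sq_abs] at this
  rw [mul_comm, Real.sqrt_eq_rpow, Real.sqrt_eq_rpow]
  exact this

lemma sqrt_integral_sq_le_of_abs_le [IsFiniteMeasure μ] {F d : α → ℝ} {A B : ℝ}
    (hd : MemLp d 2 μ) (hA : 0 ≤ A) (hB : 0 ≤ B) (hF : ∀ x, |F x| ≤ A * |d x| + B) :
    √(∫ x, F x ^ 2 ∂μ) ≤ A * √(∫ x, d x ^ 2 ∂μ) + B * √(μ.real Set.univ) := by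
  set S := ∫ x, d x ^ 2 ∂μ
  set m := μ.real Set.univ
  have hsq : Integrable (fun x ↦ A ^ 2 * d x ^ 2) μ := hd.integrable_sq.const_mul _
  have hlin : Integrable (fun x ↦ 2 * A * B * |d x| + B ^ 2) μ :=
    ((hd.integrable one_le_two).abs.const_mul _).add (integrable_const _)
  have hpoly : (fun x ↦ (A * |d x| + B) ^ 2) =
      fun x ↦ A ^ 2 * d x ^ 2 + (2 * A * B * |d x| + B ^ 2) := by
    ext x
    rw [← sq_abs (d x)]
    ring
  have hexpand :
      ∫ x, (A * |d x| + B) ^ 2 ∂μ = A ^ 2 * S + 2 * A * B * ∫ x, |d x| ∂μ + B ^ 2 * m := by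
    rw [hpoly, integral_add hsq hlin, integral_add ((hd.integrable one_le_two).abs.const_mul _)
      (integrable_const _), integral_const_mul, integral_const_mul, integral_const, smul_eq_mul]
    ring
  have hle : ∫ x, F x ^ 2 ∂μ ≤ ∫ x, (A * |d x| + B) ^ 2 ∂μ :=
    integral_mono_of_nonneg (.of_forall fun x ↦ sq_nonneg _) (hpoly ▸ hsq.add hlin)
      (.of_forall fun x ↦ (sq_abs (F x)).symm.trans_le (pow_le_pow_left₀ (abs_nonneg _) (hF x) 2))
  have hCS := integral_abs_le_sqrt_measure_mul_sqrt_integral_sq hd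
  refine Real.sqrt_le_iff.mpr ⟨by positivity, hle.trans ?_⟩
  rw [hexpand]
  have hS := Real.sq_sqrt (integral_nonneg fun x ↦ sq_nonneg (d x) : 0 ≤ S)
  have hm := Real.sq_sqrt (measureReal_nonneg : 0 ≤ m)
  nlinarith [mul_le_mul_of_nonneg_left hCS (mul_nonneg hA hB)]

noncomputable def nonlocalMap (μ : Measure α) (lam : ℝ) (G : ℝ → ℝ) (u : α → ℝ) (x : α) : ℝ :=
  lam * G (u x) ^ 2 * ((1 + ∫ y, G (u y) ∂μ) ^ 2)⁻¹

section BoundedLipschitz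

variable {G : ℝ → ℝ} {M K lam : ℝ} (hG₀ : ∀ a, 0 ≤ G a) (hGM : ∀ a, G a ≤ M)
  (hGK : ∀ a b, |G a - G b| ≤ K * |a - b|) (hlam : 0 ≤ lam)
include hG₀ hGM hGK hlam

lemma abs_nonlocalMap_sub_le {u₁ u₂ : α → ℝ} (h₁ : Integrable (fun x ↦ G (u₁ x)) μ)
    (h₂ : Integrable (fun x ↦ G (u₂ x)) μ) (hu : Integrable (fun x ↦ u₁ x - u₂ x) μ) (x : α) :
    |nonlocalMap μ lam G u₁ x - nonlocalMap μ lam G u₂ x| ≤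
      2 * lam * M * K * |u₁ x - u₂ x| + 2 * lam * M ^ 2 * K * ∫ y, |u₁ y - u₂ y| ∂μ := by
  have hP (u : α → ℝ) : 1 ≤ 1 + ∫ y, G (u y) ∂μ :=
    le_add_of_nonneg_right (integral_nonneg fun y ↦ hG₀ (u y))
  have hI : |(1 + ∫ y, G (u₁ y) ∂μ) - (1 + ∫ y, G (u₂ y) ∂μ)| ≤ K * ∫ y, |u₁ y - u₂ y| ∂μ := by
    rw [add_sub_add_left_eq_sub]
    exact abs_integral_comp_sub_integral_comp_le hGK h₁ h₂ hu
  have hM : 0 ≤ M := (hG₀ 0).trans (hGM 0)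
  rw [nonlocalMap, nonlocalMap, mul_assoc, mul_assoc, ← mul_sub, abs_mul, abs_of_nonneg hlam]
  calc lam * |G (u₁ x) ^ 2 * ((1 + ∫ y, G (u₁ y) ∂μ) ^ 2)⁻¹
        - G (u₂ x) ^ 2 * ((1 + ∫ y, G (u₂ y) ∂μ) ^ 2)⁻¹|
      ≤ lam * (2 * M * |G (u₁ x) - G (u₂ x)|
          + 2 * M ^ 2 * |(1 + ∫ y, G (u₁ y) ∂μ) - (1 + ∫ y, G (u₂ y) ∂μ)|) := by
        gcongr
        exact abs_sq_mul_inv_sq_sub_le (hG₀ _) (hGM _) (hG₀ _) (hGM _) (hP u₁) (hP u₂)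
    _ ≤ lam * (2 * M * (K * |u₁ x - u₂ x|) + 2 * M ^ 2 * (K * ∫ y, |u₁ y - u₂ y| ∂μ)) := by
        gcongr
        exact hGK _ _
    _ = _ := by ring

lemma sqrt_integral_sq_nonlocalMap_sub_le [IsFiniteMeasure μ] (hG : Measurable G)
    {u₁ u₂ : α → ℝ} (hu₁ : MemLp u₁ 2 μ) (hu₂ : MemLp u₂ 2 μ) :
    √(∫ x, (nonlocalMap μ lam G u₁ x - nonlocalMap μ lam G u₂ x) ^ 2 ∂μ) ≤
      (2 * lam * M * K + 2 * lam * M ^ 2 * K * μ.real Set.univ) *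
        √(∫ x, (u₁ x - u₂ x) ^ 2 ∂μ) := by
  have hM : 0 ≤ M := (hG₀ 0).trans (hGM 0)
  have hK : 0 ≤ K := by simpa using (abs_nonneg _).trans (hGK 1 0)
  have hGu {u : α → ℝ} (hu : MemLp u 2 μ) : Integrable (fun y ↦ G (u y)) μ :=
    .of_bound (hG.comp_aemeasurable hu.aestronglyMeasurable.aemeasurable).aestronglyMeasurable
      M (.of_forall fun y ↦ by rw [Real.norm_of_nonneg (hG₀ _)]; exact hGM _)
  have hd : MemLp (fun x ↦ u₁ x - u₂ x) 2 μ := hu₁.sub hu₂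
  set S := ∫ x, (u₁ x - u₂ x) ^ 2 ∂μ
  set m := μ.real Set.univ
  calc _ ≤ 2 * lam * M * K * √S + 2 * lam * M ^ 2 * K * (∫ y, |u₁ y - u₂ y| ∂μ) * √m :=
        sqrt_integral_sq_le_of_abs_le hd (by positivity) (by positivity)
          (abs_nonlocalMap_sub_le hG₀ hGM hGK hlam (hGu hu₁) (hGu hu₂) (hd.integrable one_le_two))
    _ ≤ 2 * lam * M * K * √S + 2 * lam * M ^ 2 * K * (√m * √S) * √m := by
        gcongr
        exact integral_abs_le_sqrt_measure_mul_sqrt_integral_sq hd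
    _ = _ := by
        linear_combination (2 * lam * M ^ 2 * K * √S) * Real.mul_self_sqrt measureReal_nonneg

end BoundedLipschitz

end Integral

theorem stmt_1_general (N : ℕ) (Ω : Set (EuclideanSpace ℝ (Fin N)))
    (hΩb : Bornology.IsBounded Ω)
    (δ lam : ℝ) (hδ : δ ∈ Set.Ioo (0:ℝ) 1) (hlam : 0 < lam)
    (g : ℝ → ℝ)
    (hg : ∀ u : ℝ, g u = if u ≤ 1 - δ then 1 / (1 - u) else 1 / δ)
    (f : (EuclideanSpace ℝ (Fin N) → ℝ) → EuclideanSpace ℝ (Fin N) → ℝ)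
    (hf : ∀ u x, f u x = lam * (g (u x)) ^ 2 *
      ((1 + ∫ y in Ω, g (u y)) ^ 2)⁻¹)
    (u₁ u₂ : EuclideanSpace ℝ (Fin N) → ℝ)
    (hu₁ : MemLp u₁ 2 (volume.restrict Ω))
    (hu₂ : MemLp u₂ 2 (volume.restrict Ω)) :
    Real.sqrt (∫ x in Ω, (f u₁ x - f u₂ x) ^ 2) ≤
      (2 * lam * (δ ^ 3)⁻¹ + 2 * lam * (δ ^ 4)⁻¹ * (volume Ω).toReal) *
        Real.sqrt (∫ x in Ω, (u₁ x - u₂ x) ^ 2) := by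
  have hδ₀ : 0 < δ := hδ.1
  have : IsFiniteMeasure (volume.restrict Ω) := ⟨by simpa using hΩb.measure_lt_top⟩
  obtain rfl : g = truncInv δ := funext fun u ↦ (hg u).trans (truncInv_eq_ite δ u).symm
  obtain rfl : f = nonlocalMap (volume.restrict Ω) lam (truncInv δ) := funext₂ hf
  convert sqrt_integral_sq_nonlocalMap_sub_le (truncInv_nonneg hδ₀.le) (truncInv_le hδ₀)
    (abs_truncInv_sub_le hδ₀) hlam.le (measurable_truncInv δ) hu₁ hu₂ using 2
  simp only [Measure.real, Measure.restrict_apply_univ, inv_pow]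
  ring

theorem stmt_1 (N : ℕ) (Ω : Set (EuclideanSpace ℝ (Fin N)))
    (hΩm : MeasurableSet Ω) (hΩb : Bornology.IsBounded Ω)
    (δ lam : ℝ) (hδ : δ ∈ Set.Ioo (0:ℝ) 1) (hlam : 0 < lam)
    (g : ℝ → ℝ)
    (hg : ∀ u : ℝ, g u = if u ≤ 1 - δ then 1 / (1 - u) else 1 / δ)
    (f : (EuclideanSpace ℝ (Fin N) → ℝ) → EuclideanSpace ℝ (Fin N) → ℝ)
    (hf : ∀ u x, f u x = lam * (g (u x)) ^ 2 *
      ((1 + ∫ y in Ω, g (u y)) ^ 2)⁻¹)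
    (u₁ u₂ : EuclideanSpace ℝ (Fin N) → ℝ)
    (hu₁ : MemLp u₁ 2 (volume.restrict Ω))
    (hu₂ : MemLp u₂ 2 (volume.restrict Ω)) :
    Real.sqrt (∫ x in Ω, (f u₁ x - f u₂ x) ^ 2) ≤
      (2 * lam * (δ ^ 3)⁻¹ + 2 * lam * (δ ^ 4)⁻¹ * (volume Ω).toReal) *
        Real.sqrt (∫ x in Ω, (u₁ x - u₂ x) ^ 2) :=
  stmt_1_general N Ω hΩb δ lam hδ hlam g hg f hf u₁ u₂ hu₁ hu₂
end

section
/- Let y : [0,∞) → ℝ be a nonnegative continuous function with A₂ = 0 in the uniform Gronwall lemma: if y' ≤ A₁ y² + h with ∫₀^∞ y dt ≤ A₃ < ∞ and ∫₀^∞ h dt ≤ A₄ < ∞, then lim_{t→∞} y(t) = 0. -/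
/-!
Uniform Gronwall: with the integrating factor `exp (-A₁ ∫ₛᵗ y)`, the inequality
`y' ≤ (A₁ y) y + h` gives `y t ≤ (y s + ∫ₛᵗ h) exp (A₁ ∫ₛᵗ y)` for `s ≤ t`,
and `∫ₛᵗ y ≤ A₃`. Given `δ > 0`, integrability of `y` and `h` provides arbitrarily
large `s` with `y s < δ` and `∫ₛ^∞ h < δ`, so `y t ≤ 2 δ exp (A₁ A₃)` for all `t ≥ s`.
-/

open Real MeasureTheory Filter Set intervalIntegral

lemma frequently_lt_of_integrableOn_Ici {f : ℝ → ℝ} {a δ : ℝ} (hf : IntegrableOn f (Ici a))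
    (hδ : 0 < δ) : ∃ᶠ t in atTop, f t < δ := by
  by_contra hfreq
  obtain ⟨T, hT⟩ := eventually_atTop.1 (not_frequently.1 hfreq)
  have hconst : IntegrableOn (fun _ ↦ δ) (Ici (max a T)) := by
    refine (hf.mono_set (Ici_subset_Ici.2 (le_max_left a T))).mono'
      aestronglyMeasurable_const ?_
    filter_upwards [ae_restrict_mem measurableSet_Ici] with t ht
    rw [norm_of_nonneg hδ.le]
    exact not_lt.1 (hT t ((le_max_right a T).trans ht))
  rw [integrableOn_const_iff] at hconst
  simp [hδ.ne', Real.volume_Ici] at hconst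

lemma intervalIntegral_le_setIntegral_of_nonneg {f : ℝ → ℝ} {s t : ℝ} {S : Set ℝ}
    (hst : s ≤ t) (hS : MeasurableSet S) (hsub : Ioc s t ⊆ S) (hf : IntegrableOn f S)
    (hf0 : ∀ x ∈ S, 0 ≤ f x) : ∫ x in s..t, f x ≤ ∫ x in S, f x := by
  rw [integral_of_le hst]
  refine setIntegral_mono_set hf ?_ hsub.eventuallyLE
  filter_upwards [ae_restrict_mem hS] with x hx using hf0 x hx

lemma hasDerivAt_integral_of_mem_Ioo {f : ℝ → ℝ} {s t u : ℝ} (hf : ContinuousOn f (Icc s t))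
    (hu : u ∈ Ioo s t) : HasDerivAt (fun v ↦ ∫ x in s..v, f x) (f u) u :=
  integral_hasDerivAt_right
    ((hf.mono (Icc_subset_Icc_right hu.2.le)).intervalIntegrable_of_Icc hu.1.le)
    ((hf.mono Ioo_subset_Icc_self).stronglyMeasurableAtFilter isOpen_Ioo u hu)
    (hf.continuousAt (Icc_mem_nhds hu.1 hu.2))

section Gronwall

variable {y y' a h : ℝ → ℝ} {s t : ℝ}

/-- The integrating factor `E = exp (-∫ a)` turns `y' ≤ a y + h` into `(y E)' ≤ h E ≤ h`. -/
lemma monotoneOn_integral_sub_mul_exp_neg_integral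
    (hy : ContinuousOn y (Icc s t)) (hy' : ∀ u ∈ Ioo s t, HasDerivAt y (y' u) u)
    (ha : ContinuousOn a (Icc s t)) (ha0 : ∀ u ∈ Icc s t, 0 ≤ a u)
    (hh : ContinuousOn h (Icc s t)) (hh0 : ∀ u ∈ Ioo s t, 0 ≤ h u)
    (hineq : ∀ u ∈ Ioo s t, y' u ≤ a u * y u + h u) :
    MonotoneOn (fun u ↦ (∫ x in s..u, h x) - y u * exp (-∫ x in s..u, a x)) (Icc s t) := by
  have primitive_cont : ∀ {f : ℝ → ℝ}, ContinuousOn f (Icc s t) →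
      ContinuousOn (fun u ↦ ∫ x in s..u, f x) (Icc s t) := fun hf ↦
    (continuousOn_primitive hf.integrableOn_Icc).congr fun u hu ↦ integral_of_le hu.1
  refine monotoneOn_of_hasDerivWithinAt_nonneg (convex_Icc s t) (f' := fun u ↦
      h u - (y' u * exp (-∫ x in s..u, a x) + y u * (exp (-∫ x in s..u, a x) * -a u)))
    ((primitive_cont hh).sub (hy.mul (primitive_cont ha).neg.rexp))
    (fun u hu ↦ ?_) (fun u hu ↦ ?_)
  · rw [interior_Icc] at hu
    exact ((hasDerivAt_integral_of_mem_Ioo hh hu).sub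
      ((hy' u hu).mul (hasDerivAt_integral_of_mem_Ioo ha hu).neg.exp)).hasDerivWithinAt
  · rw [interior_Icc] at hu
    have hE1 : exp (-∫ x in s..u, a x) ≤ 1 := by
      refine exp_le_one_iff.2 (neg_nonpos.2 (integral_nonneg hu.1.le fun x hx ↦ ?_))
      exact ha0 x ⟨hx.1, hx.2.trans hu.2.le⟩
    have hE0 := exp_pos (-∫ x in s..u, a x)
    nlinarith [hineq u hu, hh0 u hu]

lemma le_mul_exp_integral_of_hasDerivAt_le (hst : s ≤ t)
    (hy : ContinuousOn y (Icc s t)) (hy' : ∀ u ∈ Ioo s t, HasDerivAt y (y' u) u)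
    (ha : ContinuousOn a (Icc s t)) (ha0 : ∀ u ∈ Icc s t, 0 ≤ a u)
    (hh : ContinuousOn h (Icc s t)) (hh0 : ∀ u ∈ Ioo s t, 0 ≤ h u)
    (hineq : ∀ u ∈ Ioo s t, y' u ≤ a u * y u + h u) :
    y t ≤ (y s + ∫ x in s..t, h x) * exp (∫ x in s..t, a x) := by
  have hmono := monotoneOn_integral_sub_mul_exp_neg_integral hy hy' ha ha0 hh hh0 hineq
    (left_mem_Icc.2 hst) (right_mem_Icc.2 hst) hst
  simp only [integral_same, neg_zero, exp_zero, mul_one, zero_sub] at hmono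
  calc y t = y t * exp (-∫ x in s..t, a x) * exp (∫ x in s..t, a x) := by
        rw [mul_assoc, ← exp_add, neg_add_cancel, exp_zero, mul_one]
    _ ≤ (y s + ∫ x in s..t, h x) * exp (∫ x in s..t, a x) := by
        gcongr
        linarith

end Gronwall

theorem stmt_4_general (y h y' : ℝ → ℝ)
    (A₁ A₃ : ℝ) (hA₁ : 0 ≤ A₁)
    (hy0 : ∀ t ≥ (0:ℝ), 0 ≤ y t)
    (hh0 : ∀ t ≥ (0:ℝ), 0 ≤ h t)
    (hhc : ContinuousOn h (Set.Ici 0))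
    (hyd : ∀ t ≥ (0:ℝ), HasDerivAt y (y' t) t)
    (hineq : ∀ t ≥ (0:ℝ), y' t ≤ A₁ * y t ^ 2 + h t)
    (hyint : IntegrableOn y (Set.Ici 0))
    (hyI : ∫ t in Set.Ici (0:ℝ), y t ≤ A₃)
    (hhint : IntegrableOn h (Set.Ici 0)) :
    Tendsto y atTop (nhds 0) := by
  rw [NormedAddGroup.tendsto_nhds_zero]
  intro ε hε
  obtain ⟨δ, hδ, hδε⟩ : ∃ δ > 0, (δ + δ) * exp (A₁ * A₃) < ε :=
    ⟨ε / (3 * exp (A₁ * A₃)), by positivity, by field_simp; linarith⟩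
  obtain ⟨s, hys, hs0, hhs⟩ : ∃ s, y s < δ ∧ 0 ≤ s ∧ ∫ x in Ioi s, h x < δ :=
    ((frequently_lt_of_integrableOn_Ici hyint hδ).and_eventually ((eventually_ge_atTop 0).and
      ((tendsto_integral_Ioi_zero tendsto_id).eventually_lt_const hδ))).exists
  filter_upwards [eventually_ge_atTop s] with t hst
  have hsub : Icc s t ⊆ Ici 0 := fun u hu ↦ hs0.trans hu.1
  have hyc : ContinuousOn y (Icc s t) := fun u hu ↦
    (hyd u (hsub hu)).continuousAt.continuousWithinAt
  have hgron := le_mul_exp_integral_of_hasDerivAt_le (a := fun u ↦ A₁ * y u) hst hyc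
    (fun u hu ↦ hyd u (hsub (Ioo_subset_Icc_self hu))) (continuousOn_const.mul hyc)
    (fun u hu ↦ mul_nonneg hA₁ (hy0 u (hsub hu))) (hhc.mono hsub)
    (fun u hu ↦ hh0 u (hsub (Ioo_subset_Icc_self hu)))
    (fun u hu ↦ by simpa [sq, mul_assoc] using hineq u (hsub (Ioo_subset_Icc_self hu)))
  have hH : ∫ x in s..t, h x ≤ ∫ x in Ioi s, h x :=
    intervalIntegral_le_setIntegral_of_nonneg hst measurableSet_Ioi Ioc_subset_Ioi_self
      (hhint.mono_set (Ioi_subset_Ici hs0)) fun u hu ↦ hh0 u (hs0.trans hu.le)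
  have hY : ∫ x in s..t, A₁ * y x ≤ A₁ * A₃ := by
    rw [intervalIntegral.integral_const_mul]
    refine mul_le_mul_of_nonneg_left (le_trans ?_ hyI) hA₁
    exact intervalIntegral_le_setIntegral_of_nonneg hst measurableSet_Ici
      (Ioc_subset_Icc_self.trans hsub) hyint hy0
  rw [norm_of_nonneg (hy0 t (hs0.trans hst))]
  calc y t ≤ (y s + ∫ x in s..t, h x) * exp (∫ x in s..t, A₁ * y x) := hgron
    _ ≤ (δ + δ) * exp (A₁ * A₃) := by gcongr; linarith
    _ < ε := hδε

theorem stmt_4 (y h y' : ℝ → ℝ)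
    (A₁ A₃ A₄ : ℝ) (hA₁ : 0 ≤ A₁) (hA₃ : 0 ≤ A₃) (hA₄ : 0 ≤ A₄)
    (hy0 : ∀ t ≥ (0:ℝ), 0 ≤ y t)
    (hh0 : ∀ t ≥ (0:ℝ), 0 ≤ h t)
    (hyc : ContinuousOn y (Set.Ici 0))
    (hhc : ContinuousOn h (Set.Ici 0))
    (hyd : ∀ t ≥ (0:ℝ), HasDerivAt y (y' t) t)
    (hineq : ∀ t ≥ (0:ℝ), y' t ≤ A₁ * y t ^ 2 + h t)
    (hyint : IntegrableOn y (Set.Ici 0))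
    (hyI : ∫ t in Set.Ici (0:ℝ), y t ≤ A₃)
    (hhint : IntegrableOn h (Set.Ici 0))
    (hhI : ∫ t in Set.Ici (0:ℝ), h t ≤ A₄) :
    Tendsto y atTop (nhds 0) :=
  stmt_4_general y h y' A₁ A₃ hA₁ hy0 hh0 hhc hyd hineq hyint hyI hhint
end
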